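/- arXiv:1111.6094 — 5 statements merged into one kernel-verified Lean document; each statement's English description precedes it below -/
import Mathlib

section
/- Let A be a q-positive subset of an SSD space B. Then: (i) for every b ∈ B, Φ_A(b) ≤ Φ_A^@(b) and q(b) ≤ Φ_A^@(b); (ii) for every a ∈ A, Φ_A(a) = q(a) = Φ_A^@(a). -/
/-!
On `A`, `q`-positivity `q(a - c) = q(a) + q(c) - ⌊a,c⌋ ≥ 0` says `⌊a,c⌋ - q(c) ≤ q(a)`, so
`Φ_A = q` on `A`. Testing the conjugate at points of `A` then gives `Φ_A ≤ Φ_A^@`, and testing it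
at `b` itself gives `Φ_A^@(b) ≥ ⌊b,b⌋ - Φ_A(b)`; since `max (x, 2q(b) - x) ≥ q(b)`, this yields
`q ≤ Φ_A^@`. Finally `Φ_A(c) ≥ ⌊c,a⌋ - q(a)` for `a ∈ A` bounds `Φ_A^@(a)` by `q(a)`.
-/

noncomputable section

variable {B : Type*} [AddCommGroup B] [Module ℝ B]

/-- The quadratic form `q(x) = ½⌊x,x⌋` associated to the bilinear form `br`. -/
def qQ (br : B →ₗ[ℝ] B →ₗ[ℝ] ℝ) (x : B) : ℝ := (1 / 2) * br x x

/-- `A` is `q`-positive: nonempty and `q(b - c) ≥ 0` for all `b, c ∈ A`. -/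
def IsQPositive (br : B →ₗ[ℝ] B →ₗ[ℝ] ℝ) (A : Set B) : Prop :=
  A.Nonempty ∧ ∀ b ∈ A, ∀ c ∈ A, 0 ≤ qQ br (b - c)

/-- `A^π`, the set of points `q`-positively related to `A`. -/
def qPi (br : B →ₗ[ℝ] B →ₗ[ℝ] ℝ) (A : Set B) : Set B :=
  {b : B | ∀ a ∈ A, 0 ≤ qQ br (b - a)}

/-- `A` is maximally `q`-positive. -/
def IsMaxQPositive (br : B →ₗ[ℝ] B →ₗ[ℝ] ℝ) (A : Set B) : Prop :=
  IsQPositive br A ∧ ∀ C : Set B, IsQPositive br C → A ⊆ C → C = A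

/-- The generalized Fitzpatrick function `Φ_A(x) = sup_{a ∈ A} (⌊x,a⌋ - q(a))`. -/
def PhiF (br : B →ₗ[ℝ] B →ₗ[ℝ] ℝ) (A : Set B) (x : B) : EReal :=
  ⨆ a ∈ A, ((br x a - qQ br a : ℝ) : EReal)

/-- The intrinsic conjugate `f^@(b) = sup_{c ∈ B} (⌊c,b⌋ - f(c))`. -/
def intrinsicConj (br : B →ₗ[ℝ] B →ₗ[ℝ] ℝ) (f : B → EReal) (b : B) : EReal :=
  ⨆ c : B, ((br c b : ℝ) : EReal) - f c

/-- `P_q(f) = {b : f(b) = q(b)}`. -/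
def PqSet (br : B →ₗ[ℝ] B →ₗ[ℝ] ℝ) (f : B → EReal) : Set B :=
  {b : B | f b = ((qQ br b : ℝ) : EReal)}

/-- `G_f = {b : f(b) + f^@(b) = ⌊b,b⌋}`. -/
def GSet (br : B →ₗ[ℝ] B →ₗ[ℝ] ℝ) (f : B → EReal) : Set B :=
  {b : B | f b + intrinsicConj br f b = ((br b b : ℝ) : EReal)}

/-- Convexity for `ℝ ∪ {+∞}`-valued functions. -/
def ConvexE (f : B → EReal) : Prop :=
  ∀ x y : B, ∀ α β : ℝ, 0 ≤ α → 0 ≤ β → α + β = 1 →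
    f (α • x + β • y) ≤ (α : EReal) * f x + (β : EReal) * f y

/-- The weak topology `w(B,B)` induced by the functionals `⌊·,b⌋`, `b ∈ B`. -/
def weakTop (br : B →ₗ[ℝ] B →ₗ[ℝ] ℝ) : TopologicalSpace B :=
  ⨅ b : B, TopologicalSpace.induced (fun x => br x b) inferInstance

/-- Lower semicontinuity with respect to the weak topology `w(B,B)`. -/
def LscW (br : B →ₗ[ℝ] B →ₗ[ℝ] ℝ) (f : B → EReal) : Prop :=
  @LowerSemicontinuous B EReal (weakTop br) _ f

/-- `A` is `q`-representable: it has a `w(B,B)`-lsc proper convex `q`-representation. -/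
def IsQRepresentable (br : B →ₗ[ℝ] B →ₗ[ℝ] ℝ) (A : Set B) : Prop :=
  ∃ f : B → EReal, LscW br f ∧ ConvexE f ∧ (∃ x, f x ≠ ⊤) ∧
    (∀ x, ((qQ br x : ℝ) : EReal) ≤ f x) ∧ PqSet br f = A

theorem EReal.coe_le_max_two_mul_sub (x : EReal) (r : ℝ) :
    (r : EReal) ≤ max x ((2 * r : ℝ) - x) := by
  induction x using EReal.rec with
  | bot => exact le_max_of_le_right (by rw [EReal.coe_sub_bot]; exact le_top)
  | coe y =>
    rcases le_total r y with h | h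
    · exact le_max_of_le_left (mod_cast h)
    · exact le_max_of_le_right (by rw [← EReal.coe_sub]; exact mod_cast (by linarith))
  | top => simp

section

variable (br : B →ₗ[ℝ] B →ₗ[ℝ] ℝ)

theorem br_self_eq_two_mul_qQ (x : B) : br x x = 2 * qQ br x := by
  simp only [qQ]; ring

theorem qQ_sub (hsym : ∀ x y : B, br x y = br y x) (a c : B) :
    qQ br (a - c) = qQ br a + qQ br c - br a c := by
  simp only [qQ, map_sub, LinearMap.sub_apply, hsym c a]; ring

theorem sub_le_intrinsicConj (f : B → EReal) (b c : B) :
    ((br c b : ℝ) : EReal) - f c ≤ intrinsicConj br f b :=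
  le_iSup (fun c => ((br c b : ℝ) : EReal) - f c) c

theorem intrinsicConj_le_of_forall_le (f : B → EReal) (b : B) (r : ℝ)
    (h : ∀ c, ((br c b - r : ℝ) : EReal) ≤ f c) : intrinsicConj br f b ≤ r :=
  iSup_le fun c => calc
    ((br c b : ℝ) : EReal) - f c ≤ ((br c b : ℝ) : EReal) - ((br c b - r : ℝ) : EReal) :=
      EReal.sub_le_sub le_rfl (h c)
    _ = r := by rw [← EReal.coe_sub, sub_sub_cancel]

theorem qQ_le_intrinsicConj_of_le (f : B → EReal) {b : B} (hb : f b ≤ intrinsicConj br f b) :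
    ((qQ br b : ℝ) : EReal) ≤ intrinsicConj br f b := by
  refine (EReal.coe_le_max_two_mul_sub (f b) (qQ br b)).trans (max_le hb ?_)
  rw [← br_self_eq_two_mul_qQ]
  exact sub_le_intrinsicConj br f b b

variable {br} {A : Set B}

theorem le_PhiF {a : B} (ha : a ∈ A) (x : B) :
    ((br x a - qQ br a : ℝ) : EReal) ≤ PhiF br A x :=
  le_iSup₂ (f := fun a (_ : a ∈ A) => ((br x a - qQ br a : ℝ) : EReal)) a ha

theorem PhiF_eq_qQ (hsym : ∀ x y : B, br x y = br y x) (hA : IsQPositive br A) {a : B}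
    (ha : a ∈ A) : PhiF br A a = ((qQ br a : ℝ) : EReal) := by
  refine le_antisymm (iSup₂_le fun c hc => ?_) ?_
  · have hac := hA.2 a ha c hc
    rw [qQ_sub br hsym] at hac
    exact mod_cast (by linarith : br a c - qQ br c ≤ qQ br a)
  · convert le_PhiF ha a using 2
    rw [br_self_eq_two_mul_qQ]; ring

theorem PhiF_le_intrinsicConj (hsym : ∀ x y : B, br x y = br y x) (hA : IsQPositive br A)
    (b : B) : PhiF br A b ≤ intrinsicConj br (PhiF br A) b :=
  iSup₂_le fun a ha => calc
    ((br b a - qQ br a : ℝ) : EReal) = ((br a b : ℝ) : EReal) - PhiF br A a := by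
      rw [PhiF_eq_qQ hsym hA ha, hsym a b, EReal.coe_sub]
    _ ≤ intrinsicConj br (PhiF br A) b := sub_le_intrinsicConj br _ b a

theorem intrinsicConj_PhiF_le_qQ {a : B} (ha : a ∈ A) :
    intrinsicConj br (PhiF br A) a ≤ ((qQ br a : ℝ) : EReal) :=
  intrinsicConj_le_of_forall_le br _ a _ (le_PhiF ha)

end

theorem stmt0_general (br : B →ₗ[ℝ] B →ₗ[ℝ] ℝ)
    (hsym : ∀ x y : B, br x y = br y x)
    (A : Set B) (hA : IsQPositive br A) :
    (∀ b : B, PhiF br A b ≤ intrinsicConj br (PhiF br A) b ∧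
      ((qQ br b : ℝ) : EReal) ≤ intrinsicConj br (PhiF br A) b) ∧
    (∀ a ∈ A, PhiF br A a = ((qQ br a : ℝ) : EReal) ∧
      intrinsicConj br (PhiF br A) a = ((qQ br a : ℝ) : EReal)) := by
  have hle := PhiF_le_intrinsicConj hsym hA
  refine ⟨fun b => ⟨hle b, qQ_le_intrinsicConj_of_le br _ (hle b)⟩, fun a ha => ?_⟩
  have hphi := PhiF_eq_qQ hsym hA ha
  exact ⟨hphi, le_antisymm (intrinsicConj_PhiF_le_qQ ha) (hphi ▸ hle a)⟩

/-- For a q-positive A: (i) Φ_A ≤ Φ_A^@ and q ≤ Φ_A^@ on B;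
(ii) Φ_A = q = Φ_A^@ on A. -/
theorem stmt0 [Nontrivial B] (br : B →ₗ[ℝ] B →ₗ[ℝ] ℝ)
    (hsym : ∀ x y : B, br x y = br y x)
    (A : Set B) (hA : IsQPositive br A) :
    (∀ b : B, PhiF br A b ≤ intrinsicConj br (PhiF br A) b ∧
      ((qQ br b : ℝ) : EReal) ≤ intrinsicConj br (PhiF br A) b) ∧
    (∀ a ∈ A, PhiF br A a = ((qQ br a : ℝ) : EReal) ∧
      intrinsicConj br (PhiF br A) a = ((qQ br a : ℝ) : EReal)) :=
  stmt0_general br hsym A hA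
end
end

section
/- Let B be an SSD space and f : B → ℝ ∪ {+∞} a w(B,B)-lower semicontinuous proper convex function such that G_f ≠ ∅. Then G_f is q-representable. -/
noncomputable section

variable {B : Type*} [AddCommGroup B] [Module ℝ B]

/-! By Fenchel–Young, `⌊b,b⌋ ≤ f(b) + f^@(b)` for every `b`, with equality exactly on `G_f`, so
`h = ½(f + f^@)` satisfies `q ≤ h` and `P_q(h) = G_f`. The conjugate is a supremum of affine
functions `b ↦ ⌊c,b⌋ - f(c)`, which are `w(B,B)`-continuous because the form is symmetric; hence
`f^@`, and with it `h`, is convex and lower semicontinuous. At a point of `G_f` both `f` and `f^@`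
are finite, which forces `f` to be proper. -/

namespace EReal

lemma continuous_coe_mul {c : ℝ} (hc : c ≠ 0) : Continuous fun x : EReal => (c : EReal) * x := by
  refine continuous_iff_continuousAt.2 fun x => ?_
  have hc' : (c : EReal) ≠ 0 := by exact_mod_cast hc
  exact (continuousAt_mul (.inl hc') (.inl hc') (.inl (coe_ne_bot c)) (.inl (coe_ne_top c))).comp
    (continuousAt_const.prodMk continuousAt_id)

lemma coe_mul_left_injective {c : ℝ} (hc : c ≠ 0) :
    Function.Injective fun x : EReal => (c : EReal) * x := by
  intro x y h
  have hinv : ∀ z : EReal, ((c⁻¹ : ℝ) : EReal) * ((c : EReal) * z) = z := fun z => by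
    rw [← mul_assoc, ← coe_mul, inv_mul_cancel₀ hc, coe_one, one_mul]
  rw [← hinv x, ← hinv y]
  exact congrArg _ h

lemma continuous_coe_sub {α : Type*} [TopologicalSpace α] {g : α → ℝ} (hg : Continuous g)
    (a : EReal) : Continuous fun x => (g x : EReal) - a := by
  induction a with
  | bot => simp only [coe_sub_bot]; exact continuous_const
  | coe t =>
    simp only [← coe_sub]
    exact continuous_coe_real_ereal.comp (hg.sub continuous_const)
  | top => simp only [sub_top]; exact continuous_const

end EReal

lemma LowerSemicontinuous.coe_mul_ereal {α : Type*} [TopologicalSpace α] {f : α → EReal}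
    (hf : LowerSemicontinuous f) {c : ℝ} (hc : 0 < c) :
    LowerSemicontinuous fun x => (c : EReal) * f x :=
  (EReal.continuous_coe_mul hc.ne').comp_lowerSemicontinuous hf
    fun _ _ h => mul_le_mul_of_nonneg_left h (by exact_mod_cast hc.le)

lemma ConvexE.add {f g : B → EReal} (hf : ConvexE f) (hg : ConvexE g) :
    ConvexE fun x => f x + g x := by
  intro x y α β hα hβ hαβ
  rw [EReal.left_distrib_of_nonneg_of_ne_top (by exact_mod_cast hα) (EReal.coe_ne_top α),
    EReal.left_distrib_of_nonneg_of_ne_top (by exact_mod_cast hβ) (EReal.coe_ne_top β),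
    add_add_add_comm]
  exact add_le_add (hf x y α β hα hβ hαβ) (hg x y α β hα hβ hαβ)

lemma ConvexE.coe_mul {f : B → EReal} (hf : ConvexE f) {c : ℝ} (hc : 0 ≤ c) :
    ConvexE fun x => (c : EReal) * f x := by
  intro x y α β hα hβ hαβ
  rw [mul_left_comm _ (c : EReal), mul_left_comm _ (c : EReal),
    ← EReal.left_distrib_of_nonneg_of_ne_top (by exact_mod_cast hc) (EReal.coe_ne_top c)]
  exact mul_le_mul_of_nonneg_left (hf x y α β hα hβ hαβ) (by exact_mod_cast hc)

lemma ConvexE.iSup {ι : Sort*} {f : ι → B → EReal} (hf : ∀ i, ConvexE (f i)) :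
    ConvexE fun x => ⨆ i, f i x := by
  intro x y α β hα hβ hαβ
  refine iSup_le fun i => (hf i x y α β hα hβ hαβ).trans (add_le_add ?_ ?_)
  · exact mul_le_mul_of_nonneg_left (le_iSup (f · x) i) (by exact_mod_cast hα)
  · exact mul_le_mul_of_nonneg_left (le_iSup (f · y) i) (by exact_mod_cast hβ)

lemma convexE_coe_sub (ℓ : B →ₗ[ℝ] ℝ) {a : EReal} (ha : a ≠ ⊥) :
    ConvexE fun x => (ℓ x : EReal) - a := by
  intro x y α β hα hβ hαβ
  induction a with
  | bot => exact absurd rfl ha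
  | coe t =>
    simp only [← EReal.coe_sub, ← EReal.coe_mul, ← EReal.coe_add, EReal.coe_le_coe_iff, map_add,
      map_smul, smul_eq_mul]
    linear_combination t * hαβ
  | top => simp only [EReal.sub_top, bot_le]

section IntrinsicConj

variable (br : B →ₗ[ℝ] B →ₗ[ℝ] ℝ) {f : B → EReal}

lemma continuous_weakTop_apply (b : B) :
    @Continuous B ℝ (weakTop br) _ fun x => br x b :=
  continuous_iInf_dom continuous_induced_dom

lemma le_intrinsicConj (f : B → EReal) (c b : B) :
    (br c b : EReal) - f c ≤ intrinsicConj br f b :=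
  le_iSup (fun c => (br c b : EReal) - f c) c

lemma intrinsicConj_ne_bot {x : B} (hx : f x ≠ ⊤) (b : B) : intrinsicConj br f b ≠ ⊥ := by
  refine ne_bot_of_le_ne_bot ?_ (le_intrinsicConj br f x b)
  cases hfx : f x with
  | bot => simp
  | coe t => exact EReal.coe_ne_bot (br x b - t)
  | top => exact absurd hfx hx

lemma intrinsicConj_eq_top {c : B} (hc : f c = ⊥) (b : B) : intrinsicConj br f b = ⊤ :=
  top_le_iff.1 (by simpa [hc] using le_intrinsicConj br f c b)

lemma convexE_intrinsicConj (hf : ∀ x, f x ≠ ⊥) : ConvexE (intrinsicConj br f) :=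
  ConvexE.iSup fun c => convexE_coe_sub (br c) (hf c)

lemma lscW_intrinsicConj (hsym : ∀ x y : B, br x y = br y x) (f : B → EReal) :
    LscW br (intrinsicConj br f) := by
  let := weakTop br
  refine lowerSemicontinuous_iSup fun c => ?_
  simp only [hsym c]
  exact (EReal.continuous_coe_sub (continuous_weakTop_apply br c) (f c)).lowerSemicontinuous

lemma coe_apply_self_le_add_intrinsicConj {b : B} (hb : f b ≠ ⊥)
    (hb' : intrinsicConj br f b ≠ ⊥) : (br b b : EReal) ≤ f b + intrinsicConj br f b := by
  rw [add_comm, ← EReal.sub_le_iff_le_add (.inl hb) (.inr hb')]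
  exact le_intrinsicConj br f b b

lemma apply_ne_top_of_mem_gSet {b : B} (hb : b ∈ GSet br f) : f b ≠ ⊤ := by
  have hne_bot := EReal.add_ne_bot_iff.1 (hb ▸ EReal.coe_ne_bot _)
  exact ((EReal.add_ne_top_iff_ne_top₂ hne_bot.1 hne_bot.2).1 (hb ▸ EReal.coe_ne_top _)).1

lemma apply_ne_bot_of_mem_gSet {b : B} (hb : b ∈ GSet br f) (c : B) : f c ≠ ⊥ := by
  intro hc
  have hfb : f b ≠ ⊥ := (EReal.add_ne_bot_iff.1 (hb ▸ EReal.coe_ne_bot _)).1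
  have hsum : f b + intrinsicConj br f b = ⊤ := by
    rw [intrinsicConj_eq_top br hc, EReal.add_top_of_ne_bot hfb]
  exact EReal.coe_ne_top _ (hb.symm.trans hsum)

def averageWithConj (f : B → EReal) (b : B) : EReal :=
  ((1 / 2 : ℝ) : EReal) * (f b + intrinsicConj br f b)

lemma lscW_averageWithConj (hsym : ∀ x y : B, br x y = br y x) (hlsc : LscW br f)
    (hbot : ∀ x, f x ≠ ⊥) (htop : ∃ x, f x ≠ ⊤) : LscW br (averageWithConj br f) := by
  let := weakTop br
  obtain ⟨x₀, hx₀⟩ := htop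
  refine LowerSemicontinuous.coe_mul_ereal ?_ one_half_pos
  exact hlsc.add' (lscW_intrinsicConj br hsym f) fun x =>
    EReal.continuousAt_add (.inr (intrinsicConj_ne_bot br hx₀ x)) (.inl (hbot x))

lemma convexE_averageWithConj (hconv : ConvexE f) (hbot : ∀ x, f x ≠ ⊥) :
    ConvexE (averageWithConj br f) :=
  (hconv.add (convexE_intrinsicConj br hbot)).coe_mul one_half_pos.le

lemma qQ_le_averageWithConj (hbot : ∀ x, f x ≠ ⊥) (htop : ∃ x, f x ≠ ⊤) (b : B) :
    (qQ br b : EReal) ≤ averageWithConj br f b := by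
  obtain ⟨x₀, hx₀⟩ := htop
  rw [qQ, EReal.coe_mul]
  exact mul_le_mul_of_nonneg_left
    (coe_apply_self_le_add_intrinsicConj br (hbot b) (intrinsicConj_ne_bot br hx₀ b))
    (by norm_num)

lemma pqSet_averageWithConj (f : B → EReal) : PqSet br (averageWithConj br f) = GSet br f := by
  ext b
  simp only [PqSet, GSet, averageWithConj, qQ, EReal.coe_mul]
  exact (EReal.coe_mul_left_injective (by norm_num)).eq_iff

end IntrinsicConj

theorem stmt6_general (br : B →ₗ[ℝ] B →ₗ[ℝ] ℝ)
    (hsym : ∀ x y : B, br x y = br y x)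
    (f : B → EReal) (hlsc : LscW br f) (hconv : ConvexE f)
    (hne : (GSet br f).Nonempty) :
    IsQRepresentable br (GSet br f) := by
  obtain ⟨b₀, hb₀⟩ := hne
  have hbot : ∀ x, f x ≠ ⊥ := apply_ne_bot_of_mem_gSet br hb₀
  have htop : ∃ x, f x ≠ ⊤ := ⟨b₀, apply_ne_top_of_mem_gSet br hb₀⟩
  have hb₀' : b₀ ∈ PqSet br (averageWithConj br f) := (pqSet_averageWithConj br f).symm ▸ hb₀
  exact ⟨averageWithConj br f, lscW_averageWithConj br hsym hlsc hbot htop,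
    convexE_averageWithConj br hconv hbot, ⟨b₀, hb₀'.symm ▸ EReal.coe_ne_top _⟩,
    qQ_le_averageWithConj br hbot htop, pqSet_averageWithConj br f⟩

/-- If f is a w(B,B)-lsc proper convex function with G_f ≠ ∅,
then G_f is q-representable. -/
theorem stmt6 [Nontrivial B] (br : B →ₗ[ℝ] B →ₗ[ℝ] ℝ)
    (hsym : ∀ x y : B, br x y = br y x)
    (f : B → EReal) (hlsc : LscW br f) (hconv : ConvexE f)
    (hbot : ∀ x, f x ≠ ⊥) (htop : ∃ x, f x ≠ ⊤)
    (hne : (GSet br f).Nonempty) :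
    IsQRepresentable br (GSet br f) :=
  stmt6_general br hsym f hlsc hconv hne
end
end

section
/- Let A be a q-positive subset of an SSD space B, let Y be a topological real vector space, and let f : B → Y be a linear mapping that is continuous from the w(B,B) topology to the topology of Y, such that f(A) is convex and closed and f(x) = 0 implies q(x) = 0. Then Φ_A(b) ≥ q(b) for every b in the w(B,B)-closure of the convex hull of A. -/
noncomputable section

variable {B : Type*} [AddCommGroup B] [Module ℝ B]

/-!
If `b` lies in the weak closure of `conv A`, then `f b` lies in the closure of `f (conv A) = conv (f A) = f A`,
so `f b = f a` for some `a ∈ A`. Hence `q(b - a) = 0`, and the identity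
`q(b) = (⌊b,a⌋ - q(a)) + q(b - a)` gives `q(b) ≤ Φ_A(b)`.
-/

theorem LinearMap.image_closure_convexHull_subset {X Y : Type*} [AddCommGroup X] [Module ℝ X]
    [TopologicalSpace X] [AddCommGroup Y] [Module ℝ Y] [TopologicalSpace Y]
    {f : X →ₗ[ℝ] Y} (hf : Continuous f) {A : Set X}
    (hconv : Convex ℝ (f '' A)) (hclosed : IsClosed (f '' A)) :
    f '' closure (convexHull ℝ A) ⊆ f '' A := by
  calc f '' closure (convexHull ℝ A)
      ⊆ closure (f '' convexHull ℝ A) := image_closure_subset_closure_image hf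
    _ = f '' A := by rw [f.image_convexHull, hconv.convexHull_eq, hclosed.closure_eq]

section SSD

variable {br : B →ₗ[ℝ] B →ₗ[ℝ] ℝ}

theorem qQ_sub_of_symm (hsym : ∀ x y : B, br x y = br y x) (b a : B) :
    qQ br (b - a) = qQ br b - (br b a - qQ br a) := by
  have hab := hsym a b
  simp only [qQ, map_sub, LinearMap.sub_apply]
  linarith

theorem le_PhiF_of_mem {A : Set B} {a : B} (ha : a ∈ A) (b : B) :
    ((br b a - qQ br a : ℝ) : EReal) ≤ PhiF br A b :=
  le_iSup₂_of_le (f := fun a _ => ((br b a - qQ br a : ℝ) : EReal)) a ha le_rfl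

theorem qQ_le_PhiF_of_qQ_sub_nonpos (hsym : ∀ x y : B, br x y = br y x) {A : Set B} {a b : B}
    (ha : a ∈ A) (hq : qQ br (b - a) ≤ 0) :
    ((qQ br b : ℝ) : EReal) ≤ PhiF br A b := by
  refine le_trans ?_ (le_PhiF_of_mem ha b)
  rw [qQ_sub_of_symm hsym] at hq
  exact EReal.coe_le_coe_iff.mpr (by linarith)

end SSD

theorem stmt11_general (br : B →ₗ[ℝ] B →ₗ[ℝ] ℝ)
    (hsym : ∀ x y : B, br x y = br y x)
    {Y : Type*} [AddCommGroup Y] [Module ℝ Y] [TopologicalSpace Y]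
    (A : Set B)
    (f : B →ₗ[ℝ] Y) (hf : @Continuous B Y (weakTop br) _ f)
    (hconv : Convex ℝ (f '' A)) (hclosed : IsClosed (f '' A))
    (h0 : ∀ x : B, f x = 0 → qQ br x = 0) :
    ∀ b ∈ @closure B (weakTop br) (convexHull ℝ A),
      ((qQ br b : ℝ) : EReal) ≤ PhiF br A b := by
  let _ : TopologicalSpace B := weakTop br
  intro b hb
  obtain ⟨a, ha, hfa⟩ := f.image_closure_convexHull_subset hf hconv hclosed ⟨b, hb, rfl⟩
  have hq : qQ br (b - a) = 0 := h0 _ (by rw [map_sub, hfa, sub_self])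
  exact qQ_le_PhiF_of_qQ_sub_nonpos hsym ha hq.le

/-- If f : B → Y is linear, w(B,B)-continuous, f(A) is convex
and closed, and f(x) = 0 ⇒ q(x) = 0, then Φ_A ≥ q on cl_w(conv A). -/
theorem stmt11 [Nontrivial B] (br : B →ₗ[ℝ] B →ₗ[ℝ] ℝ)
    (hsym : ∀ x y : B, br x y = br y x)
    {Y : Type*} [AddCommGroup Y] [Module ℝ Y] [TopologicalSpace Y]
    [IsTopologicalAddGroup Y] [ContinuousSMul ℝ Y]
    (A : Set B) (hA : IsQPositive br A)
    (f : B →ₗ[ℝ] Y) (hf : @Continuous B Y (weakTop br) _ f)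
    (hconv : Convex ℝ (f '' A)) (hclosed : IsClosed (f '' A))
    (h0 : ∀ x : B, f x = 0 → qQ br x = 0) :
    ∀ b ∈ @closure B (weakTop br) (convexHull ℝ A),
      ((qQ br b : ℝ) : EReal) ≤ PhiF br A b :=
  stmt11_general br hsym A f hf hconv hclosed h0
end
end

section
/- Let A be a maximally q-positive convex subset of an SSD space B. Then A is an affine subset of B; that is, for all x, y ∈ A and all λ ∈ ℝ, λx + (1 − λ)y ∈ A. -/
noncomputable section

variable {B : Type*} [AddCommGroup B] [Module ℝ B]

/-!
For `z = λx + (1 - λ)y` and `a ∈ A`, `z - a = λ(x - a) + (1 - λ)(y - a)` lies in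
`(|λ| + |1 - λ|) • (A - A)`, since `A - A` is convex and symmetric. As `q` is nonnegative on
`A - A` and homogeneous of degree two, `z ∈ A^π`, and `A^π ⊆ A` by maximality.
-/

open scoped Pointwise

theorem qQ_smul (br : B →ₗ[ℝ] B →ₗ[ℝ] ℝ) (t : ℝ) (w : B) : qQ br (t • w) = t ^ 2 * qQ br w := by
  simp only [qQ, map_smul, LinearMap.smul_apply, smul_eq_mul]
  ring

theorem qQ_neg (br : B →ₗ[ℝ] B →ₗ[ℝ] ℝ) (w : B) : qQ br (-w) = qQ br w := by
  simp [qQ]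

theorem Convex.smul_add_smul_mem_abs_add_abs_smul {S : Set B} (hS : Convex ℝ S)
    (hneg : ∀ u ∈ S, -u ∈ S) {u v : B} (hu : u ∈ S) (hv : v ∈ S) (a b : ℝ) :
    a • u + b • v ∈ (|a| + |b|) • S := by
  have abs_smul_form : ∀ (c : ℝ) {w : B}, w ∈ S → ∃ w' ∈ S, c • w = |c| • w' := by
    intro c w hw
    rcases le_or_gt 0 c with hc | hc
    · exact ⟨w, hw, by rw [abs_of_nonneg hc]⟩
    · exact ⟨-w, hneg w hw, by rw [abs_of_neg hc, neg_smul_neg]⟩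
  obtain ⟨u', hu', hau⟩ := abs_smul_form a hu
  obtain ⟨v', hv', hbv⟩ := abs_smul_form b hv
  rcases (add_nonneg (abs_nonneg a) (abs_nonneg b)).eq_or_lt with ht | ht
  · obtain ⟨ha, hb⟩ := (add_eq_zero_iff_of_nonneg (abs_nonneg a) (abs_nonneg b)).mp ht.symm
    rw [← ht, Set.zero_smul_set ⟨u, hu⟩, abs_eq_zero.mp ha, abs_eq_zero.mp hb]
    simp
  refine ⟨(|a| / (|a| + |b|)) • u' + (|b| / (|a| + |b|)) • v',
    hS hu' hv' (by positivity) (by positivity) (by field_simp), ?_⟩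
  dsimp only
  rw [hau, hbv, smul_add, smul_smul, smul_smul, mul_div_cancel₀ _ ht.ne',
    mul_div_cancel₀ _ ht.ne']

theorem IsQPositive.qQ_nonneg_of_mem_smul_sub {br : B →ₗ[ℝ] B →ₗ[ℝ] ℝ} {A : Set B}
    (hA : IsQPositive br A) {t : ℝ} {w : B} (hw : w ∈ t • (A - A)) : 0 ≤ qQ br w := by
  obtain ⟨_, ⟨p, hp, r, hr, rfl⟩, rfl⟩ := hw
  rw [qQ_smul]
  exact mul_nonneg (sq_nonneg t) (hA.2 p hp r hr)

theorem IsMaxQPositive.qPi_subset {br : B →ₗ[ℝ] B →ₗ[ℝ] ℝ} {A : Set B}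
    (hA : IsMaxQPositive br A) : qPi br A ⊆ A := by
  intro z hz
  have hC : IsQPositive br (insert z A) := by
    refine ⟨Set.insert_nonempty z A, ?_⟩
    rintro b (rfl | hb) c (rfl | hc)
    · simp [qQ]
    · exact hz c hc
    · rw [← neg_sub, qQ_neg]
      exact hz b hb
    · exact hA.1.2 b hb c hc
  rw [← hA.2 _ hC (Set.subset_insert z A)]
  exact Set.mem_insert z A

theorem stmt12_general (br : B →ₗ[ℝ] B →ₗ[ℝ] ℝ)
    (A : Set B) (hA : IsMaxQPositive br A) (hconv : Convex ℝ A) :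
    ∀ x ∈ A, ∀ y ∈ A, ∀ lam : ℝ, lam • x + (1 - lam) • y ∈ A := by
  intro x hx y hy lam
  apply hA.qPi_subset
  intro a ha
  have hsplit : lam • x + (1 - lam) • y - a = lam • (x - a) + (1 - lam) • (y - a) := by module
  have hdiff_neg : ∀ u ∈ A - A, -u ∈ A - A := by
    rintro _ ⟨p, hp, r, hr, rfl⟩
    exact neg_sub p r ▸ Set.sub_mem_sub hr hp
  rw [hsplit]
  exact hA.1.qQ_nonneg_of_mem_smul_sub <| (hconv.sub hconv).smul_add_smul_mem_abs_add_abs_smul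
    hdiff_neg (Set.sub_mem_sub hx ha) (Set.sub_mem_sub hy ha) lam (1 - lam)

/-- A maximally q-positive convex set is affine. -/
theorem stmt12 [Nontrivial B] (br : B →ₗ[ℝ] B →ₗ[ℝ] ℝ)
    (hsym : ∀ x y : B, br x y = br y x)
    (A : Set B) (hA : IsMaxQPositive br A) (hconv : Convex ℝ A) :
    ∀ x ∈ A, ∀ y ∈ A, ∀ lam : ℝ, lam • x + (1 - lam) • y ∈ A :=
  stmt12_general br A hA hconv
end
end

section
/- Let B be an SSD space and f : B → ℝ ∪ {+∞} a proper convex function. Then for every x, y ∈ B and every α, β ≥ 0 with α + β = 1, one has α·max{f(x), q(x)} + β·max{f^@(y), q(y)} ≥ q(αx + βy) (with the convention that the left-hand side is +∞ if f(x) = +∞ with α > 0 or f^@(y) = +∞ with β > 0). -/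
noncomputable section

variable {B : Type*} [AddCommGroup B] [Module ℝ B]

/-!
Since `α + β = 1`, expanding the quadratic form gives
`q(αx + βy) = α² q(x) + αβ ⌊x,y⌋ + β² q(y)`, while
`α a + β b = α² a + αβ (a + b) + β² b`. So it suffices to have `q(x) ≤ a`, `q(y) ≤ b` and
`⌊x,y⌋ ≤ a + b`, and for `a = max{f(x), q(x)}`, `b = max{f^@(y), q(y)}` the last one is the
Fenchel–Young inequality `⌊x,y⌋ ≤ f(x) + f^@(y)`. If one of the maxima is `+∞` there is nothing
to prove, since its coefficient is then positive or the other term alone bounds `q`.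
-/

theorem qQ_smul_add_smul (br : B →ₗ[ℝ] B →ₗ[ℝ] ℝ) (hsym : ∀ x y : B, br x y = br y x)
    (α β : ℝ) (x y : B) :
    qQ br (α • x + β • y) = α ^ 2 * qQ br x + α * β * br x y + β ^ 2 * qQ br y := by
  simp only [qQ, map_add, map_smul, LinearMap.add_apply, LinearMap.smul_apply, smul_eq_mul,
    hsym y x]
  ring

theorem qQ_smul_add_smul_le (br : B →ₗ[ℝ] B →ₗ[ℝ] ℝ) (hsym : ∀ x y : B, br x y = br y x)
    {x y : B} {a b α β : ℝ} (hxa : qQ br x ≤ a) (hyb : qQ br y ≤ b) (hxy : br x y ≤ a + b)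
    (hα : 0 ≤ α) (hβ : 0 ≤ β) (hαβ : α + β = 1) :
    qQ br (α • x + β • y) ≤ α * a + β * b := by
  have hab : α * a + β * b = α ^ 2 * a + α * β * (a + b) + β ^ 2 * b := by
    linear_combination (-(α * a) - β * b) * hαβ
  rw [qQ_smul_add_smul br hsym, hab]
  gcongr

theorem coe_br_le_add_intrinsicConj (br : B →ₗ[ℝ] B →ₗ[ℝ] ℝ) (f : B → EReal) {x y : B}
    (hfx : f x ≠ ⊤) (hconj : intrinsicConj br f y ≠ ⊤) :
    ((br x y : ℝ) : EReal) ≤ f x + intrinsicConj br f y := by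
  rw [add_comm, ← EReal.sub_le_iff_le_add (Or.inr hconj) (Or.inl hfx)]
  exact le_iSup (fun c => ((br c y : ℝ) : EReal) - f c) x

theorem EReal.exists_real_le_of_le_add {M N : EReal} {u v s : ℝ} (hu : (u : EReal) ≤ M)
    (hv : (v : EReal) ≤ N) (hs : M ≠ ⊤ → N ≠ ⊤ → (s : EReal) ≤ M + N) :
    ∃ a b : ℝ, (a : EReal) ≤ M ∧ (b : EReal) ≤ N ∧ u ≤ a ∧ v ≤ b ∧ s ≤ a + b := by
  induction M using EReal.rec with
  | bot => exact absurd hu (by simp)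
  | top =>
    exact ⟨max u (s - v), v, le_top, hv, le_max_left _ _, le_rfl,
      by linarith [le_max_right u (s - v)]⟩
  | coe m =>
    induction N using EReal.rec with
    | bot => exact absurd hv (by simp)
    | top =>
      exact ⟨m, max v (s - m), le_rfl, le_top, by exact_mod_cast hu, le_max_left _ _,
        by linarith [le_max_right v (s - m)]⟩
    | coe n =>
      exact ⟨m, n, le_rfl, le_rfl, by exact_mod_cast hu, by exact_mod_cast hv,
        by exact_mod_cast hs (EReal.coe_ne_top m) (EReal.coe_ne_top n)⟩

theorem stmt18_general (br : B →ₗ[ℝ] B →ₗ[ℝ] ℝ)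
    (hsym : ∀ x y : B, br x y = br y x)
    (f : B → EReal) :
    ∀ x y : B, ∀ α β : ℝ, 0 ≤ α → 0 ≤ β → α + β = 1 →
      ((qQ br (α • x + β • y) : ℝ) : EReal) ≤
        (α : EReal) * max (f x) ((qQ br x : ℝ) : EReal) +
        (β : EReal) * max (intrinsicConj br f y) ((qQ br y : ℝ) : EReal) := by
  intro x y α β hα hβ hαβ
  set M := max (f x) ((qQ br x : ℝ) : EReal)
  set N := max (intrinsicConj br f y) ((qQ br y : ℝ) : EReal)
  have fenchel_young (hM : M ≠ ⊤) (hN : N ≠ ⊤) : ((br x y : ℝ) : EReal) ≤ M + N :=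
    (coe_br_le_add_intrinsicConj br f (ne_top_of_le_ne_top hM (le_max_left _ _))
      (ne_top_of_le_ne_top hN (le_max_left _ _))).trans
      (add_le_add (le_max_left _ _) (le_max_left _ _))
  obtain ⟨a, b, haM, hbN, hxa, hyb, hxy⟩ :=
    EReal.exists_real_le_of_le_add (le_max_right _ _) (le_max_right _ _) fenchel_young
  calc ((qQ br (α • x + β • y) : ℝ) : EReal)
      ≤ ((α * a + β * b : ℝ) : EReal) := by
        exact_mod_cast qQ_smul_add_smul_le br hsym hxa hyb hxy hα hβ hαβ
    _ = (α : EReal) * a + (β : EReal) * b := by norm_cast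
    _ ≤ α * M + β * N := add_le_add (mul_le_mul_of_nonneg_left haM (by exact_mod_cast hα))
        (mul_le_mul_of_nonneg_left hbN (by exact_mod_cast hβ))

/-- For a proper convex f and α, β ≥ 0 with α + β = 1,
α·max{f(x), q(x)} + β·max{f^@(y), q(y)} ≥ q(αx + βy). -/
theorem stmt18 [Nontrivial B] (br : B →ₗ[ℝ] B →ₗ[ℝ] ℝ)
    (hsym : ∀ x y : B, br x y = br y x)
    (f : B → EReal) (hconv : ConvexE f)
    (hbot : ∀ x, f x ≠ ⊥) (htop : ∃ x, f x ≠ ⊤) :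
    ∀ x y : B, ∀ α β : ℝ, 0 ≤ α → 0 ≤ β → α + β = 1 →
      ((qQ br (α • x + β • y) : ℝ) : EReal) ≤
        (α : EReal) * max (f x) ((qQ br x : ℝ) : EReal) +
        (β : EReal) * max (intrinsicConj br f y) ((qQ br y : ℝ) : EReal) :=
  stmt18_general br hsym f
end
end
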